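/- arXiv:math/0201176 — 2 statements merged into one kernel-verified Lean document; each statement's English description precedes it below -/
import Mathlib

section
/- For the root system of GL_n, let 1 ≤ k ≤ n and m ≥ 1, and consider the reduced expression t_{m e_k} = (s_{k-1} ⋯ s_1 τ s_{n-1} ⋯ s_k)^m. Let x = u_1 τ v_1 u_2 τ v_2 ⋯ u_m τ v_m be a subexpression of it, where each u_i is a subword of s_{k-1} ⋯ s_1 and each v_i is a subword of s_{n-1} ⋯ s_k, and suppose that for some index p, u_p is a proper subword of s_{k-1} ⋯ s_1 (i.e., at least one letter s_i with 1 ≤ i ≤ k-1 is deleted). Then λ(x) ⋠ m e_k (the translation part of x does not satisfy λ(x) ⪯ m e_k). -/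
open scoped Classical

noncomputable section

/-- The coefficient ring `ℤ[q^{1/2}, q^{-1/2}]`, realized as Laurent polynomials
over `ℤ` in the variable `v = q^{1/2}`. -/
abbrev HckA : Type := LaurentPolynomial ℤ

/-- The element `q = v²` of `ℤ[q^{1/2}, q^{-1/2}]`. -/
def qA : HckA := LaurentPolynomial.T 2

/-- The element `Q = q^{-1/2} - q^{1/2}`. -/
def QA : HckA := LaurentPolynomial.T (-1) - LaurentPolynomial.T 1

/-- A root system `(X^* , X_* , R, Ř, Π)` (with `Y = X^*`, `X = X_*`), together with
its finite Weyl group `W0` and its extended affine Weyl group `Wt = X_* ⋊ W0`,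
with the canonical decomposition `g = t (lam g) * emb (fpart g)`. -/
structure AffineWeylSetup (Y X W0 Wt : Type)
    [AddCommGroup Y] [AddCommGroup X] [Group W0] [Group Wt] where
  /-- the perfect pairing `⟨·,·⟩ : X^* × X_* → ℤ` -/
  pair : Y → X → ℤ
  pair_add_left : ∀ a b x, pair (a + b) x = pair a x + pair b x
  pair_add_right : ∀ a x y, pair a (x + y) = pair a x + pair a y
  /-- the finite set of roots `R ⊆ X^*` -/
  R : Finset Y
  /-- the simple roots `Π` -/
  Pi : Finset Y
  Pi_subset : Pi ⊆ R
  /-- the positive roots `R⁺` -/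
  Rpos : Finset Y
  Rpos_subset : Rpos ⊆ R
  pos_or_neg : ∀ α ∈ R, α ∈ Rpos ∨ -α ∈ Rpos
  not_pos_and_neg : ∀ α ∈ R, ¬(α ∈ Rpos ∧ -α ∈ Rpos)
  neg_mem : ∀ α ∈ R, -α ∈ R
  /-- the coroot `ᾰ ∈ X_*` attached to a root `α` -/
  coroot : Y → X
  /-- the action of `W0` on `X_*` -/
  act : W0 → X → X
  act_one : ∀ x, act 1 x = x
  act_mul : ∀ u v x, act (u * v) x = act u (act v x)
  act_add : ∀ u x y, act u (x + y) = act u x + act u y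
  /-- the action of `W0` on `X^*` -/
  actY : W0 → Y → Y
  actY_one : ∀ a, actY 1 a = a
  actY_mul : ∀ u v a, actY (u * v) a = actY u (actY v a)
  act_pair : ∀ u a x, pair (actY u a) (act u x) = pair a x
  actY_root : ∀ u, ∀ α ∈ R, actY u α ∈ R
  /-- the reflection `s_α ∈ W0` attached to a root `α` -/
  sref : Y → W0
  sref_act : ∀ α ∈ R, ∀ x, act (sref α) x = x - pair α x • coroot α
  sref_sq : ∀ α ∈ R, sref α * sref α = 1
  w0_gen : ∀ u : W0, u ∈ Subgroup.closure (sref '' ↑Pi)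
  /-- the translation embedding `X_* → W̃`, `x ↦ t_x` -/
  t : X → Wt
  t_zero : t 0 = 1
  t_add : ∀ x y, t (x + y) = t x * t y
  /-- the embedding `W0 → W̃` -/
  emb : W0 →* Wt
  conj_t : ∀ u x, emb u * t x = t (act u x) * emb u
  /-- the translation part `λ(g)` of `g = t_{λ(g)} w` -/
  lam : Wt → X
  /-- the finite part `w` of `g = t_{λ(g)} w` -/
  fpart : Wt → W0
  decomp : ∀ g, g = t (lam g) * emb (fpart g)
  lam_spec : ∀ x u, lam (t x * emb u) = x
  fpart_spec : ∀ x u, fpart (t x * emb u) = u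

namespace AffineWeylSetup

variable {Y X W0 Wt : Type} [AddCommGroup Y] [AddCommGroup X] [Group W0] [Group Wt]
variable (S : AffineWeylSetup Y X W0 Wt)

/-- `λ ∈ X_*` is dominant if `⟨α, λ⟩ ≥ 0` for all simple roots `α`. -/
def Dominant (x : X) : Prop := ∀ α ∈ S.Pi, 0 ≤ S.pair α x

/-- `λ ∈ X_*` is antidominant if `⟨α, λ⟩ ≤ 0` for all simple roots `α`. -/
def Antidominant (x : X) : Prop := ∀ α ∈ S.Pi, S.pair α x ≤ 0

/-- `λ ∈ X_*` is minuscule if `⟨α, λ⟩ ∈ {0, 1, -1}` for every root `α`. -/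
def Minuscule (x : X) : Prop :=
  ∀ α ∈ S.R, S.pair α x = 0 ∨ S.pair α x = 1 ∨ S.pair α x = -1

/-- The partial order `⪯` on `X_*`: `x ⪯ y` iff `y - x` is a nonnegative integral
combination of simple coroots. -/
def preceq (x y : X) : Prop :=
  ∃ c : Y → ℕ, y - x = ∑ α ∈ S.Pi, (c α : ℤ) • S.coroot α

/-- The partial order `⪯` on `X^*`: `a ⪯ b` iff `b - a` is a nonnegative integral
combination of simple roots. -/
def preceqY (a b : Y) : Prop :=
  ∃ c : Y → ℕ, b - a = ∑ α ∈ S.Pi, (c α : ℤ) • α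

/-- `Π_m`: the set of `⪯`-minimal roots. -/
def Pim : Set Y := {β | β ∈ S.R ∧ ∀ γ ∈ S.R, S.preceqY γ β → γ = β}

/-- The length function on the extended affine Weyl group:
`l(t_x w) = Σ_{α ∈ R⁺, w⁻¹ α ∈ R⁻} |⟨α,x⟩ - 1| + Σ_{α ∈ R⁺, w⁻¹ α ∈ R⁺} |⟨α,x⟩|`. -/
def len (g : Wt) : ℕ :=
  (∑ α ∈ S.Rpos.filter (fun α => S.actY (S.fpart g)⁻¹ α ∉ S.Rpos),
      (S.pair α (S.lam g) - 1).natAbs)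
  + ∑ α ∈ S.Rpos.filter (fun α => S.actY (S.fpart g)⁻¹ α ∈ S.Rpos),
      (S.pair α (S.lam g)).natAbs

/-- The set `S_a` of simple affine reflections:
`{s_α : α ∈ Π} ∪ {t_{-ᾰ} s_α : α ∈ Π_m}`. -/
def Sa : Set Wt :=
  ((fun α => S.emb (S.sref α)) '' ↑S.Pi) ∪
    ((fun β => S.t (-(S.coroot β)) * S.emb (S.sref β)) '' S.Pim)

/-- `Ω`: the length-zero elements of the extended affine Weyl group. -/
def Omega : Set Wt := {g | S.len g = 0}

/-- The affine Weyl group `W_a`, generated by `S_a`. -/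
def Wa : Subgroup Wt := Subgroup.closure S.Sa

/-- `IsReducedWord S L τ g` says that `g = s_1 ⋯ s_r τ` is a reduced expression,
where `L = [s_1, …, s_r]` is a list of elements of `S_a` with `r = l(g)` and `τ ∈ Ω`. -/
def IsReducedWord (L : List Wt) (τ g : Wt) : Prop :=
  (∀ s ∈ L, s ∈ S.Sa) ∧ τ ∈ S.Omega ∧ g = L.prod * τ ∧ L.length = S.len g

/-- The (extended) Bruhat order on `W̃`, via the subword property: `x ≤ y` iff `x` is
obtained from a reduced expression `y = s_1 ⋯ s_r τ` by taking a subword of `s_1 ⋯ s_r`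
(keeping the same `τ ∈ Ω`). -/
def bruhatLE (x y : Wt) : Prop :=
  ∃ L τ, S.IsReducedWord L τ y ∧ ∃ L' : List Wt, L'.Sublist L ∧ x = L'.prod * τ

/-- The right translation part `t(x)` in the decomposition `x = w t_{t(x)}`. -/
def rlam (g : Wt) : X := S.act (S.fpart g)⁻¹ (S.lam g)

/-- The `μ`-admissible set `Adm(μ) = {x : x ≤ t_{w(μ)} for some w ∈ W0}`. -/
def Adm (μ : X) : Set Wt := {x | ∃ w : W0, S.bruhatLE x (S.t (S.act w μ))}

end AffineWeylSetup

/-- The affine Hecke algebra attached to an `AffineWeylSetup`: an algebra `H` over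
`ℤ[q^{1/2}, q^{-1/2}]` with basis `T_w` (`w ∈ W̃`), satisfying the braid relations
`T_g T_{g'} = T_{g g'}` when lengths add, and the quadratic relations
`(T_s + 1)(T_s - q) = 0` for `s ∈ S_a`.  Each `T_w` is invertible. -/
structure HeckeAlg {Y X W0 Wt : Type}
    [AddCommGroup Y] [AddCommGroup X] [Group W0] [Group Wt]
    (S : AffineWeylSetup Y X W0 Wt) (H : Type) [Ring H] [Algebra HckA H] where
  /-- the Iwahori–Matsumoto basis `T_w` -/
  T : Module.Basis Wt HckA H
  T_one : T 1 = 1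
  T_mul : ∀ g g' : Wt, S.len (g * g') = S.len g + S.len g' → T g * T g' = T (g * g')
  T_quad : ∀ s ∈ S.Sa, (T s + 1) * (T s - algebraMap HckA H qA) = 0
  T_unit : ∀ g : Wt, IsUnit (T g)

namespace HeckeAlg

variable {Y X W0 Wt : Type} [AddCommGroup Y] [AddCommGroup X] [Group W0] [Group Wt]
variable {S : AffineWeylSetup Y X W0 Wt} {H : Type} [Ring H] [Algebra HckA H]

/-- The renormalized basis element `T̃_w = q^{-l(w)/2} T_w`. -/
def Tt (hk : HeckeAlg S H) (g : Wt) : H :=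
  (LaurentPolynomial.T (-(S.len g : ℤ)) : HckA) • hk.T g

/-- The coefficient of `T̃_x` in an element `h ∈ H`, i.e. `h = Σ_x (coeffTt h x) T̃_x`. -/
def coeffTt (hk : HeckeAlg S H) (h : H) (x : Wt) : HckA :=
  (LaurentPolynomial.T ((S.len x : ℤ)) : HckA) * hk.T.repr h x

/-- The support of an element of `H` with respect to the basis `(T̃_w)` (equivalently
`(T_w)`). -/
def supp (hk : HeckeAlg S H) (h : H) : Set Wt := {w | hk.T.repr h w ≠ 0}

/-- The `R`-polynomial `R̃_{x,y}`, defined by `T̃_{y⁻¹}⁻¹ = Σ_x R̃_{x,y} T̃_x`. -/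
def Rt (hk : HeckeAlg S H) (x y : Wt) : HckA :=
  hk.coeffTt (Ring.inverse (hk.Tt y⁻¹)) x

/-- `Θ⁻` attached to a decomposition `λ = λ'_1 - λ'_2` (`λ'_i` antidominant):
`Θ⁻_λ = T̃_{λ'_1} T̃_{λ'_2}⁻¹`. -/
def ThetaAnti (hk : HeckeAlg S H) (l1 l2 : X) : H :=
  hk.Tt (S.t l1) * Ring.inverse (hk.Tt (S.t l2))

/-- `Θ` attached to a decomposition `λ = λ_1 - λ_2` (`λ_i` dominant):
`Θ_λ = T̃_{λ_1} T̃_{λ_2}⁻¹`. -/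
def ThetaDom (hk : HeckeAlg S H) (l1 l2 : X) : H :=
  hk.Tt (S.t l1) * Ring.inverse (hk.Tt (S.t l2))

end HeckeAlg

end
section GLn

/-- The `i`-th standard basis vector `e_i ∈ ℤⁿ` (`i : Fin n`). -/
def stdE (n : ℕ) (i : Fin n) : Fin n → ℤ := fun j => if j = i then 1 else 0

/-- The standard basis vector `e_{i+1} ∈ ℤⁿ`, with a 0-based index `i : ℕ`. -/
def eN (n : ℕ) (i : ℕ) : Fin n → ℤ := fun j => if (j : ℕ) = i then 1 else 0

/-- `IsGLn n S` pins down an `AffineWeylSetup` as the root datum of `GL_n`: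
`X_* = X^* = ℤⁿ`, `W0 = S_n` acting by permuting coordinates, roots `e_i - e_j`
(`i ≠ j`), positive roots `e_i - e_j` (`i < j`), simple roots `α_i = e_i - e_{i+1}`,
with `coroot (e_i - e_j) = e_i - e_j` and `s_{e_i - e_j}` the transposition `(i j)`. -/
structure IsGLn (n : ℕ) {Wt : Type} [Group Wt]
    (S : AffineWeylSetup (Fin n → ℤ) (Fin n → ℤ) (Equiv.Perm (Fin n)) Wt) : Prop where
  pair_eq : ∀ a x, S.pair a x = ∑ i, a i * x i
  R_eq : S.R = Finset.univ.offDiag.image (fun p : Fin n × Fin n => stdE n p.1 - stdE n p.2)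
  Rpos_eq : S.Rpos = (Finset.univ.offDiag.filter (fun p : Fin n × Fin n => p.1 < p.2)).image
      (fun p => stdE n p.1 - stdE n p.2)
  Pi_eq : S.Pi = (Finset.range (n-1)).image (fun j => eN n j - eN n (j+1))
  coroot_eq : ∀ i j : Fin n, i ≠ j → S.coroot (stdE n i - stdE n j) = stdE n i - stdE n j
  act_eq : ∀ w x i, S.act w x i = x (w⁻¹ i)
  actY_eq : ∀ w a i, S.actY w a i = a (w⁻¹ i)
  sref_eq : ∀ i j : Fin n, i ≠ j → S.sref (stdE n i - stdE n j) = Equiv.swap i j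

variable {n : ℕ} {Wt : Type} [Group Wt]

/-- The simple reflection `s_{j+1} = s_{α_{j+1}}` of `GL_n` (0-based index `j`,
so `srefGL S j` is the paper's `s_{j+1}`). -/
def srefGL (S : AffineWeylSetup (Fin n → ℤ) (Fin n → ℤ) (Equiv.Perm (Fin n)) Wt)
    (j : ℕ) : Equiv.Perm (Fin n) :=
  S.sref (eN n j - eN n (j+1))

/-- The distinguished length-zero element `τ = t_{(1,0,…,0)} s_1 ⋯ s_{n-1} ∈ Ω` of `GL_n`. -/
def tauGL (S : AffineWeylSetup (Fin n → ℤ) (Fin n → ℤ) (Equiv.Perm (Fin n)) Wt) : Wt :=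
  S.t (eN n 0) * S.emb ((List.range (n-1)).map (srefGL S)).prod

/-- The word `s_{k-1} ⋯ s_1` (1-based indices), as a list in `W̃`. -/
def SkList (S : AffineWeylSetup (Fin n → ℤ) (Fin n → ℤ) (Equiv.Perm (Fin n)) Wt)
    (k : ℕ) : List Wt :=
  (List.range (k-1)).reverse.map (fun j => S.emb (srefGL S j))

/-- The word `s_{n-1} ⋯ s_k` (1-based indices), as a list in `W̃`. -/
def VkList (S : AffineWeylSetup (Fin n → ℤ) (Fin n → ℤ) (Equiv.Perm (Fin n)) Wt)
    (k : ℕ) : List Wt :=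
  (List.range' (k-1) (n-k)).reverse.map (fun j => S.emb (srefGL S j))

end GLn

/-!
Let `Σ` be the sum of the first `k - 1` coordinates. Each simple coroot `e_j - e_{j+1}` has
`Σ ≥ 0`, so `λ ⪯ μ` forces `Σ λ ≤ Σ μ`, while `Σ (m e_k) = 0`. On the other hand, writing
`u_i τ v_i = t_{u_i(e_1)} w_i`, the translation part `λ(x)` is the sum of the basis vectors
`w_1 ⋯ w_{i-1} u_i (e_1)`. Take `p` minimal with `u_p` proper. For `i < p` the finite part
`w_i = (s_{k-1} ⋯ s_1) (s_1 ⋯ s_{n-1}) v_i` fixes `e_1, …, e_{k-1}`, and a proper subword of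
`s_{k-1} ⋯ s_1` sends `e_1` into `e_1, …, e_{k-1}`; so the `p`-th summand contributes `1` to
`Σ λ(x)`.
-/

theorem Set.mapsTo_list_prod {α : Type*} {s : Set α} {L : List (Equiv.Perm α)}
    (h : ∀ f ∈ L, Set.MapsTo f s s) : Set.MapsTo (⇑L.prod) s s := by
  induction L with
  | nil => exact Set.mapsTo_id s
  | cons f L ih =>
    rw [List.prod_cons, Equiv.Perm.coe_mul]
    exact (h f List.mem_cons_self).comp (ih fun g hg => h g (List.mem_cons_of_mem f hg))

section AdjacentSwaps

variable {n : ℕ}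

def IsAdjacentSwaps (σ : ℕ → Equiv.Perm (Fin n)) : Prop :=
  ∀ (j : ℕ) (h : j + 1 < n), σ j = Equiv.swap ⟨j, Nat.lt_of_succ_lt h⟩ ⟨j + 1, h⟩

namespace IsAdjacentSwaps

variable {σ : ℕ → Equiv.Perm (Fin n)}

theorem apply_val (hσ : IsAdjacentSwaps σ) {j : ℕ} (h : j + 1 < n) (q : Fin n) :
    (σ j q : ℕ) = if (q : ℕ) = j then j + 1 else if (q : ℕ) = j + 1 then j else q := by
  rw [hσ j h, Equiv.swap_apply_def]
  split_ifs <;> simp_all [Fin.ext_iff]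

theorem prod_apply_of_forall_ne (hσ : IsAdjacentSwaps σ) {L : List ℕ} {q : Fin n}
    (hL : ∀ j ∈ L, j + 1 < n ∧ (q : ℕ) ≠ j ∧ (q : ℕ) ≠ j + 1) : (L.map σ).prod q = q := by
  refine Set.mapsTo_singleton.mp <| Set.mapsTo_list_prod <| List.forall_mem_map.mpr
    fun j hj => Set.mapsTo_singleton.mpr ?_
  have := hL j hj
  exact Fin.ext (by rw [hσ.apply_val this.1]; split_ifs <;> omega)

theorem prod_apply_le (hσ : IsAdjacentSwaps σ) {r : ℕ} (hr : r < n) {L : List ℕ}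
    (hL : ∀ j ∈ L, j < r) {q : Fin n} (hq : (q : ℕ) ≤ r) : ((L.map σ).prod q : ℕ) ≤ r := by
  refine Set.mapsTo_list_prod (s := {q' : Fin n | (q' : ℕ) ≤ r})
    (List.forall_mem_map.mpr fun j hj q' hq' => ?_) hq
  have := hL j hj
  simp only [Set.mem_ofPred_eq] at hq' ⊢
  rw [hσ.apply_val (by omega)]
  split_ifs <;> omega

theorem prod_range_apply (hσ : IsAdjacentSwaps σ) {r : ℕ} (hr : r < n) {q : Fin n}
    (hq : (q : ℕ) < r) : (((List.range r).map σ).prod q : ℕ) = q + 1 := by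
  induction r with
  | zero => omega
  | succ r ih =>
    rw [List.range_succ, List.map_append, List.prod_append, List.map_singleton,
      List.prod_singleton, Equiv.Perm.mul_apply]
    rcases Nat.lt_or_ge (q : ℕ) r with h | h
    · have hfix : σ r q = q := Fin.ext (by rw [hσ.apply_val hr]; split_ifs <;> omega)
      rw [hfix, ih (by omega) h]
    · have hmove : σ r q = ⟨r + 1, hr⟩ := Fin.ext (by rw [hσ.apply_val hr, if_pos (by omega)])
      have hfix : ((List.range r).map σ).prod ⟨r + 1, hr⟩ = ⟨r + 1, hr⟩ :=
        hσ.prod_apply_of_forall_ne fun j hj => by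
          have := List.mem_range.mp hj
          dsimp only
          omega
      rw [hmove, hfix]
      dsimp only
      omega

theorem prod_range_reverse_apply (hσ : IsAdjacentSwaps σ) {r : ℕ} (hr : r < n) {q : Fin n}
    (hq1 : 1 ≤ (q : ℕ)) (hqr : (q : ℕ) ≤ r) :
    (((List.range r).reverse.map σ).prod q : ℕ) = q - 1 := by
  induction r with
  | zero => omega
  | succ r ih =>
    rw [List.range_succ, List.reverse_append, List.reverse_singleton, List.singleton_append,
      List.map_cons, List.prod_cons, Equiv.Perm.mul_apply]
    rcases Nat.lt_or_ge (q : ℕ) (r + 1) with h | h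
    · rw [hσ.apply_val hr, ih (by omega) (by omega)]
      split_ifs <;> omega
    · rw [hσ.prod_apply_of_forall_ne fun j hj => by
        have := List.mem_range.mp (List.mem_reverse.mp hj)
        omega, hσ.apply_val hr]
      split_ifs <;> omega

theorem prod_apply_zero_lt_of_sublist (hσ : IsAdjacentSwaps σ) {r : ℕ} (hr : r < n) (hn : 0 < n)
    {L : List ℕ} (hsub : L.Sublist (List.range r).reverse) (hne : L ≠ (List.range r).reverse) :
    ((L.map σ).prod ⟨0, hn⟩ : ℕ) < r := by
  induction r generalizing L with
  | zero => exact absurd (List.sublist_nil.mp hsub) hne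
  | succ r ih =>
    rw [List.range_succ, List.reverse_append, List.reverse_singleton,
      List.singleton_append] at hsub hne
    rcases List.sublist_cons_iff.mp hsub with h | ⟨L', rfl, hL'⟩
    · have := hσ.prod_apply_le (by omega)
        (fun j hj => List.mem_range.mp (List.mem_reverse.mp (h.subset hj)))
        (q := ⟨0, hn⟩) (Nat.zero_le r)
      omega
    · have := ih (by omega) hL' fun h => hne (h ▸ rfl)
      rw [List.map_cons, List.prod_cons, Equiv.Perm.mul_apply, hσ.apply_val hr]
      split_ifs <;> omega

end IsAdjacentSwaps

end AdjacentSwaps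

namespace AffineWeylSetup

variable {Y X W0 Wt : Type} [AddCommGroup Y] [AddCommGroup X] [Group W0] [Group Wt]
variable (S : AffineWeylSetup Y X W0 Wt)

theorem emb_mul_t_mul_emb (a c b : W0) (x : X) :
    S.emb a * (S.t x * S.emb c) * S.emb b = S.t (S.act a x) * S.emb (a * c * b) := by
  rw [← mul_assoc, S.conj_t, map_mul, map_mul]
  group

theorem mul_eq_t_mul_emb (g h : Wt) :
    g * h = S.t (S.lam g + S.act (S.fpart g) (S.lam h)) * S.emb (S.fpart g * S.fpart h) := by
  conv_lhs => rw [S.decomp g, S.decomp h]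
  rw [S.t_add, map_mul, mul_assoc, ← mul_assoc (S.emb _), S.conj_t]
  group

theorem lam_mul (g h : Wt) : S.lam (g * h) = S.lam g + S.act (S.fpart g) (S.lam h) := by
  rw [S.mul_eq_t_mul_emb, S.lam_spec]

theorem fpart_mul (g h : Wt) : S.fpart (g * h) = S.fpart g * S.fpart h := by
  rw [S.mul_eq_t_mul_emb, S.fpart_spec]

def fpartHom : Wt →* W0 where
  toFun := S.fpart
  map_one' := by simpa [S.t_zero] using S.fpart_spec 0 1
  map_mul' := S.fpart_mul

theorem lam_prod_range (g : ℕ → Wt) (M : ℕ) :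
    S.lam ((List.range M).map g).prod =
      ∑ i ∈ Finset.range M, S.act (S.fpart ((List.range i).map g).prod) (S.lam (g i)) := by
  induction M with
  | zero => simpa [S.t_zero] using S.lam_spec 0 1
  | succ M ih =>
    rw [List.range_succ, List.map_append, List.prod_append, List.map_singleton,
      List.prod_singleton, lam_mul, ih, Finset.sum_range_succ]

end AffineWeylSetup

section GLn

variable {n : ℕ}

def partialSum (n r : ℕ) : (Fin n → ℤ) →+ ℤ where
  toFun v := ∑ j ∈ Finset.univ.filter (fun j : Fin n => (j : ℕ) < r), v j
  map_zero' := by simp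
  map_add' v w := Finset.sum_add_distrib

theorem partialSum_stdE (r : ℕ) (i : Fin n) :
    partialSum n r (stdE n i) = if (i : ℕ) < r then 1 else 0 := by
  simp [partialSum, stdE]

theorem partialSum_eN_of_le {r t : ℕ} (h : r ≤ t) : partialSum n r (eN n t) = 0 := by
  simp only [partialSum, AddMonoidHom.coe_mk, ZeroHom.coe_mk]
  refine Finset.sum_eq_zero fun j hj => if_neg ?_
  have : (j : ℕ) < r := (Finset.mem_filter.mp hj).2
  omega

theorem eN_eq_stdE {i : ℕ} (h : i < n) : eN n i = stdE n ⟨i, h⟩ := by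
  funext j
  simp [eN, stdE, Fin.ext_iff]

variable {Wt : Type} [Group Wt]
variable {S : AffineWeylSetup (Fin n → ℤ) (Fin n → ℤ) (Equiv.Perm (Fin n)) Wt}

theorem prod_map_emb_srefGL (L : List ℕ) :
    (L.map fun j => S.emb (srefGL S j)).prod = S.emb (L.map (srefGL S)).prod := by
  rw [map_list_prod, List.map_map]
  rfl

namespace IsGLn

theorem act_stdE (hgl : IsGLn n S) (w : Equiv.Perm (Fin n)) (i : Fin n) :
    S.act w (stdE n i) = stdE n (w i) := by
  funext j
  simp only [hgl.act_eq, stdE, Equiv.Perm.inv_eq_iff_eq]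

theorem isAdjacentSwaps_srefGL (hgl : IsGLn n S) : IsAdjacentSwaps (srefGL S) := by
  intro j hj
  rw [srefGL, eN_eq_stdE, eN_eq_stdE hj]
  exact hgl.sref_eq _ _ (by simp [Fin.ext_iff])

theorem partialSum_coroot_nonneg (hgl : IsGLn n S) (r : ℕ) {α : Fin n → ℤ} (hα : α ∈ S.Pi) :
    0 ≤ partialSum n r (S.coroot α) := by
  rw [hgl.Pi_eq] at hα
  obtain ⟨j, hj, rfl⟩ := Finset.mem_image.mp hα
  have hj : j + 1 < n := by have := Finset.mem_range.mp hj; omega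
  rw [eN_eq_stdE (Nat.lt_of_succ_lt hj), eN_eq_stdE hj,
    hgl.coroot_eq _ _ (by simp [Fin.ext_iff]), map_sub, partialSum_stdE, partialSum_stdE]
  dsimp only
  split_ifs <;> omega

theorem partialSum_le_of_preceq (hgl : IsGLn n S) (r : ℕ) {x y : Fin n → ℤ}
    (h : S.preceq x y) : partialSum n r x ≤ partialSum n r y := by
  obtain ⟨c, hc⟩ := h
  have : 0 ≤ partialSum n r (y - x) := by
    rw [hc, map_sum]
    exact Finset.sum_nonneg fun α hα => by
      rw [map_zsmul, smul_eq_mul]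
      exact mul_nonneg (Int.natCast_nonneg _) (hgl.partialSum_coroot_nonneg r hα)
  rwa [map_sub, sub_nonneg] at this

theorem one_le_partialSum_lam_prod (hgl : IsGLn n S) {g : ℕ → Wt} {m p r : ℕ} (hp : p < m)
    (hbasis : ∀ i < m, ∃ j, S.lam (g i) = stdE n j)
    (hfix : ∀ i < p, ∀ q : Fin n, (q : ℕ) < r → S.fpart (g i) q = q)
    {j : Fin n} (hj : (j : ℕ) < r) (hgp : S.lam (g p) = stdE n j) :
    1 ≤ partialSum n r (S.lam ((List.range m).map g).prod) := by
  have hprefix : S.fpart ((List.range p).map g).prod j = j := by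
    change S.fpartHom _ j = j
    rw [map_list_prod, List.map_map]
    exact Set.mapsTo_singleton.mp <| Set.mapsTo_list_prod <| List.forall_mem_map.mpr
      fun i hi => Set.mapsTo_singleton.mpr (hfix i (List.mem_range.mp hi) j hj)
  rw [S.lam_prod_range, map_sum]
  calc 1 = partialSum n r (S.act (S.fpart ((List.range p).map g).prod) (S.lam (g p))) := by
        rw [hgp, hgl.act_stdE, hprefix, partialSum_stdE, if_pos hj]
    _ ≤ _ := by
      refine Finset.single_le_sum (f := fun i =>
        partialSum n r (S.act (S.fpart ((List.range i).map g).prod) (S.lam (g i))))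
        (fun i hi => ?_) (Finset.mem_range.mpr hp)
      obtain ⟨j', hj'⟩ := hbasis i (Finset.mem_range.mp hi)
      rw [hj', hgl.act_stdE, partialSum_stdE]
      split_ifs <;> norm_num

theorem emb_mul_tauGL_mul_emb (hgl : IsGLn n S) (hn : 0 < n) (a b : Equiv.Perm (Fin n)) :
    S.emb a * tauGL S * S.emb b =
      S.t (stdE n (a ⟨0, hn⟩)) *
        S.emb (a * ((List.range (n - 1)).map (srefGL S)).prod * b) := by
  rw [tauGL, S.emb_mul_t_mul_emb, eN_eq_stdE hn, hgl.act_stdE]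

theorem exists_lam_eq_stdE (hgl : IsGLn n S) (hn : 0 < n) {k : ℕ} {U V : List Wt}
    (hU : U.Sublist (SkList S k)) (hV : V.Sublist (VkList S k)) :
    ∃ j, S.lam (U.prod * tauGL S * V.prod) = stdE n j := by
  obtain ⟨J, -, rfl⟩ := List.sublist_map_iff.mp hU
  obtain ⟨K, -, rfl⟩ := List.sublist_map_iff.mp hV
  rw [prod_map_emb_srefGL, prod_map_emb_srefGL, hgl.emb_mul_tauGL_mul_emb hn, S.lam_spec]
  exact ⟨_, rfl⟩

/-- The full word `s_{k-1} ⋯ s_1` undoes the shift `q ↦ q + 1` performed by `τ` below `k - 1`,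
while `s_{n-1} ⋯ s_k` does not touch these coordinates. -/
theorem fpart_apply_of_lt (hgl : IsGLn n S) {k : ℕ} (hkn : k ≤ n) {V : List Wt}
    (hV : V.Sublist (VkList S k)) {q : Fin n} (hq : (q : ℕ) < k - 1) :
    S.fpart ((SkList S k).prod * tauGL S * V.prod) q = q := by
  have hσ := hgl.isAdjacentSwaps_srefGL
  obtain ⟨K, hK, rfl⟩ := List.sublist_map_iff.mp hV
  rw [SkList, prod_map_emb_srefGL, prod_map_emb_srefGL, hgl.emb_mul_tauGL_mul_emb q.pos,
    S.fpart_spec, Equiv.Perm.mul_apply, Equiv.Perm.mul_apply]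
  have hKq : (K.map (srefGL S)).prod q = q := by
    refine hσ.prod_apply_of_forall_ne fun j hj => ?_
    have := List.mem_range'_1.mp (List.mem_reverse.mp (hK.subset hj))
    omega
  have hshift := hσ.prod_range_apply (r := n - 1) (by omega) (q := q) (by omega)
  rw [hKq]
  refine Fin.ext ?_
  rw [hσ.prod_range_reverse_apply (by omega) (by omega) (by omega), hshift]
  omega

theorem exists_lam_eq_stdE_of_ne_SkList (hgl : IsGLn n S) {k : ℕ} (hkn : k ≤ n)
    {U V : List Wt} (hU : U.Sublist (SkList S k)) (hV : V.Sublist (VkList S k))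
    (hne : U ≠ SkList S k) :
    ∃ j : Fin n, (j : ℕ) < k - 1 ∧ S.lam (U.prod * tauGL S * V.prod) = stdE n j := by
  obtain ⟨J, hJ, rfl⟩ := List.sublist_map_iff.mp hU
  obtain ⟨K, -, rfl⟩ := List.sublist_map_iff.mp hV
  have hJne : J ≠ (List.range (k - 1)).reverse := fun h => hne (by rw [h, SkList])
  have hn : 0 < n := by
    by_contra h0
    exact hJne (by simpa [show k - 1 = 0 by omega] using hJ)
  rw [prod_map_emb_srefGL, prod_map_emb_srefGL, hgl.emb_mul_tauGL_mul_emb hn, S.lam_spec]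
  exact ⟨_, hgl.isAdjacentSwaps_srefGL.prod_apply_zero_lt_of_sublist (by omega) hn hJ hJne, rfl⟩

end IsGLn

end GLn

open AffineWeylSetup in
theorem translation_part_not_preceq_general
    {Wt : Type} [Group Wt]
    (n m k : ℕ) (hkn : k ≤ n)
    (S : AffineWeylSetup (Fin n → ℤ) (Fin n → ℤ) (Equiv.Perm (Fin n)) Wt)
    (hgl : IsGLn n S)
    (U V : ℕ → List Wt)
    (hU : ∀ i < m, (U i).Sublist (SkList S k))
    (hV : ∀ i < m, (V i).Sublist (VkList S k))
    (p : ℕ) (hp : p < m) (hproper : U p ≠ SkList S k)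
    (x : Wt)
    (hx : x = ((List.range m).map (fun i => (U i).prod * tauGL S * (V i).prod)).prod) :
    ¬ S.preceq (S.lam x) ((m : ℤ) • eN n (k-1)) := by
  have hproper' : ∃ i, i < m ∧ U i ≠ SkList S k := ⟨p, hp, hproper⟩
  obtain ⟨hp₀, hne⟩ := Nat.find_spec hproper'
  set p₀ := Nat.find hproper'
  have hfull : ∀ i < p₀, U i = SkList S k := fun i hi =>
    not_not.mp fun h => Nat.find_min hproper' hi ⟨hi.trans hp₀, h⟩
  obtain ⟨j, hj, hlam⟩ :=
    hgl.exists_lam_eq_stdE_of_ne_SkList hkn (hU p₀ hp₀) (hV p₀ hp₀) hne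
  have hge := hgl.one_le_partialSum_lam_prod hp₀
    (fun i hi => hgl.exists_lam_eq_stdE j.pos (hU i hi) (hV i hi))
    (fun i hi q hq => by
      rw [hfull i hi]
      exact hgl.fpart_apply_of_lt hkn (hV i (hi.trans hp₀)) hq) hj hlam
  intro hpre
  have hle := hgl.partialSum_le_of_preceq (k - 1) hpre
  rw [map_zsmul, partialSum_eN_of_le le_rfl, smul_zero, hx] at hle
  omega

open AffineWeylSetup in
/-- **Lemma 4.5.** Let `x = u_1 τ v_1 ⋯ u_m τ v_m` be a subexpression of
`t_{m e_k} = (s_{k-1} ⋯ s_1 τ s_{n-1} ⋯ s_k)^m`, where each `u_i` (resp. `v_i`) is a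
subword of `s_{k-1} ⋯ s_1` (resp. `s_{n-1} ⋯ s_k`), and suppose some `u_p` is a
proper subword.  Then `λ(x) ⋠ m e_k`. -/
theorem translation_part_not_preceq
    {Wt : Type} [Group Wt]
    (n m k : ℕ) (hk1 : 1 ≤ k) (hkn : k ≤ n) (hm : 1 ≤ m)
    (S : AffineWeylSetup (Fin n → ℤ) (Fin n → ℤ) (Equiv.Perm (Fin n)) Wt)
    (hgl : IsGLn n S)
    (U V : ℕ → List Wt)
    (hU : ∀ i < m, (U i).Sublist (SkList S k))
    (hV : ∀ i < m, (V i).Sublist (VkList S k))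
    (p : ℕ) (hp : p < m) (hproper : U p ≠ SkList S k)
    (x : Wt)
    (hx : x = ((List.range m).map (fun i => (U i).prod * tauGL S * (V i).prod)).prod) :
    ¬ S.preceq (S.lam x) ((m : ℤ) • eN n (k-1)) :=
  translation_part_not_preceq_general n m k hkn S hgl U V hU hV p hp hproper x hx
end

section
/- Every coweight λ ∈ Z^n of GL_n can be written as λ = λ_1 + λ_2 + ⋯ + λ_k, where each λ_j is a minuscule coweight and the lengths add: l(t_λ) = l(t_{λ_1}) + l(t_{λ_2}) + ⋯ + l(t_{λ_k}). -/
open scoped Classical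

/-! Write `λ = ∑_{-B < s ≤ B} μ_s` with the level layers `μ_s = 𝟙[s ≤ λ] - 𝟙[s ≤ 0]`. Each
layer takes two adjacent values, so it is minuscule, and each is weakly increasing along the
order of the coordinates of `λ`. Hence for every positive root `e_i - e_j` the pairings
`μ_s i - μ_s j` all have the sign of `λ i - λ j`, no cancellation occurs in
`|λ i - λ j| = |∑_s (μ_s i - μ_s j)|`, and `l(t_x) = ∑_{α ∈ R⁺} |⟨α, x⟩|` is additive
along the decomposition. -/

lemma Int.natAbs_sum_of_nonneg_or_nonpos {ι : Type*} {s : Finset ι} {g : ι → ℤ}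
    (h : (∀ i ∈ s, 0 ≤ g i) ∨ (∀ i ∈ s, g i ≤ 0)) :
    (∑ i ∈ s, g i).natAbs = ∑ i ∈ s, (g i).natAbs := by
  zify
  rcases h with h | h
  · rw [Finset.abs_sum_of_nonneg h]
    exact Finset.sum_congr rfl fun i hi => (abs_of_nonneg (h i hi)).symm
  · rw [← abs_neg, ← Finset.sum_neg_distrib,
      Finset.abs_sum_of_nonneg fun i hi => neg_nonneg.2 (h i hi)]
    exact Finset.sum_congr rfl fun i hi => (abs_of_nonpos (h i hi)).symm

namespace AffineWeylSetup

variable {Y X W0 Wt : Type} [AddCommGroup Y] [AddCommGroup X] [Group W0] [Group Wt]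
variable (S : AffineWeylSetup Y X W0 Wt)

lemma pair_sum_right {ι : Type*} (a : Y) (s : Finset ι) (f : ι → X) :
    S.pair a (∑ i ∈ s, f i) = ∑ i ∈ s, S.pair a (f i) :=
  map_sum (AddMonoidHom.mk' (S.pair a) (S.pair_add_right a)) f s

lemma len_t (x : X) : S.len (S.t x) = ∑ α ∈ S.Rpos, (S.pair α x).natAbs := by
  have htx : S.t x = S.t x * S.emb 1 := by rw [map_one, mul_one]
  have hfpart : S.fpart (S.t x) = 1 := by rw [htx, S.fpart_spec]
  have hlam : S.lam (S.t x) = x := by rw [htx, S.lam_spec]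
  simp [len, hfpart, hlam, S.actY_one]

lemma len_t_sum_of_nonneg_or_nonpos {ι : Type*} (s : Finset ι) (f : ι → X)
    (h : ∀ α ∈ S.Rpos, (∀ i ∈ s, 0 ≤ S.pair α (f i)) ∨ (∀ i ∈ s, S.pair α (f i) ≤ 0)) :
    S.len (S.t (∑ i ∈ s, f i)) = ∑ i ∈ s, S.len (S.t (f i)) := by
  simp only [len_t, S.pair_sum_right]
  rw [Finset.sum_comm]
  exact Finset.sum_congr rfl fun α hα => Int.natAbs_sum_of_nonneg_or_nonpos (h α hα)

end AffineWeylSetup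

section LevelLayers

variable {ι : Type*} (lam : ι → ℤ)

def levelLayer (s : ℤ) : ι → ℤ :=
  fun i => (if s ≤ lam i then 1 else 0) - if s ≤ 0 then 1 else 0

variable {lam}

lemma levelLayer_sub_mem (s : ℤ) (i j : ι) :
    levelLayer lam s i - levelLayer lam s j = 0 ∨ levelLayer lam s i - levelLayer lam s j = 1 ∨
      levelLayer lam s i - levelLayer lam s j = -1 := by
  simp only [levelLayer]
  split_ifs <;> omega

lemma levelLayer_mono (s : ℤ) {i j : ι} (hij : lam j ≤ lam i) :
    levelLayer lam s j ≤ levelLayer lam s i := by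
  simp only [levelLayer]
  split_ifs <;> omega

lemma sum_levelLayer {B : ℤ} (hB : ∀ i, |lam i| ≤ B) :
    ∑ s ∈ Finset.Ioc (-B) B, levelLayer lam s = lam := by
  funext i
  have hi := abs_le.1 (hB i)
  have hcount : ∀ c, -B ≤ c → c ≤ B →
      ∑ s ∈ Finset.Ioc (-B) B, (if s ≤ c then (1 : ℤ) else 0) = c + B := by
    intro c hlo hhi
    have hfilter : (Finset.Ioc (-B) B).filter (· ≤ c) = Finset.Ioc (-B) c := by
      ext
      simp only [Finset.mem_filter, Finset.mem_Ioc]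
      omega
    rw [← Finset.sum_filter, Finset.sum_const, nsmul_one, hfilter, Int.card_Ioc]
    omega
  simp only [Finset.sum_apply, levelLayer, Finset.sum_sub_distrib]
  rw [hcount _ hi.1 hi.2, hcount 0 (by omega) (by omega)]
  ring

end LevelLayers

namespace IsGLn

variable {n : ℕ} {Wt : Type} [Group Wt]
  {S : AffineWeylSetup (Fin n → ℤ) (Fin n → ℤ) (Equiv.Perm (Fin n)) Wt}

lemma pair_stdE_sub (hgl : IsGLn n S) (i j : Fin n) (x : Fin n → ℤ) :
    S.pair (stdE n i - stdE n j) x = x i - x j := by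
  simp [hgl.pair_eq, stdE, sub_mul, Finset.sum_sub_distrib]

lemma exists_eq_stdE_sub_of_mem_R (hgl : IsGLn n S) {α : Fin n → ℤ} (hα : α ∈ S.R) :
    ∃ i j : Fin n, α = stdE n i - stdE n j := by
  rw [hgl.R_eq] at hα
  obtain ⟨⟨i, j⟩, -, rfl⟩ := Finset.mem_image.mp hα
  exact ⟨i, j, rfl⟩

lemma minuscule_levelLayer (hgl : IsGLn n S) (lam : Fin n → ℤ) (s : ℤ) :
    S.Minuscule (levelLayer lam s) := by
  intro α hα
  obtain ⟨i, j, rfl⟩ := hgl.exists_eq_stdE_sub_of_mem_R hα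
  rw [hgl.pair_stdE_sub]
  exact levelLayer_sub_mem s i j

lemma len_t_sum_levelLayer (hgl : IsGLn n S) (lam : Fin n → ℤ) (T : Finset ℤ) :
    S.len (S.t (∑ s ∈ T, levelLayer lam s)) = ∑ s ∈ T, S.len (S.t (levelLayer lam s)) := by
  refine S.len_t_sum_of_nonneg_or_nonpos T _ fun α hα => ?_
  obtain ⟨i, j, rfl⟩ := hgl.exists_eq_stdE_sub_of_mem_R (S.Rpos_subset hα)
  simp only [hgl.pair_stdE_sub, sub_nonneg, sub_nonpos]
  rcases le_total (lam j) (lam i) with h | h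
  · exact Or.inl fun s _ => levelLayer_mono s h
  · exact Or.inr fun s _ => levelLayer_mono s h

end IsGLn

open AffineWeylSetup in
/-- **Section 5.** Every coweight `λ ∈ ℤⁿ` of `GL_n` can be written as a sum of
minuscule coweights `λ = λ_1 + ⋯ + λ_k` with `l(t_λ) = l(t_{λ_1}) + ⋯ + l(t_{λ_k})`. -/
theorem gln_minuscule_decomposition
    {Wt : Type} [Group Wt] (n : ℕ)
    (S : AffineWeylSetup (Fin n → ℤ) (Fin n → ℤ) (Equiv.Perm (Fin n)) Wt)
    (hgl : IsGLn n S) (lam : Fin n → ℤ) :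
    ∃ L : List (Fin n → ℤ), (∀ μ ∈ L, S.Minuscule μ) ∧ lam = L.sum ∧
      S.len (S.t lam) = (L.map (fun μ => S.len (S.t μ))).sum := by
  set T := Finset.Ioc (-∑ i, |lam i|) (∑ i, |lam i|)
  have hsum : ∑ s ∈ T, levelLayer lam s = lam :=
    sum_levelLayer fun i =>
      Finset.single_le_sum (fun j _ => abs_nonneg (lam j)) (Finset.mem_univ i)
  refine ⟨T.toList.map (levelLayer lam), ?_, ?_, ?_⟩
  · simp only [List.mem_map, Finset.mem_toList]
    rintro μ ⟨s, -, rfl⟩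
    exact hgl.minuscule_levelLayer lam s
  · rw [Finset.sum_map_toList, hsum]
  · rw [List.map_map, Finset.sum_map_toList, Function.comp_def, ← hgl.len_t_sum_levelLayer,
      hsum]
end
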